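/- arXiv:2604.25958 — 3 statements merged into one kernel-verified Lean document; each statement's English description precedes it below -/
import Mathlib

section
/- Let Θ be a finite set and ψ a real number with ψ > 0. Let m₁, m₂ : 2^Θ → ℝ be OverMasses on the interval [0, ψ], i.e. 0 ≤ mᵢ(A) ≤ ψ for all A ⊆ Θ and ∑_{A ⊆ Θ} mᵢ(A) = ψ for i = 1, 2. Define the OverConjunctive combination m(A) = (1/ψ) · ∑_{X,Y ⊆ Θ, X ∩ Y = A} m₁(X)·m₂(Y). Then 0 ≤ m(A) ≤ ψ for every A ⊆ Θ and ∑_{A ⊆ Θ} m(A) = ψ; that is, the OverNormalized conjunctive combination of two OverMasses on [0, ψ] is again a function on 2^Θ with values in [0, ψ] and total mass ψ. -/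
/-- The OverNormalized conjunctive combination
`m A = (1/ψ) ∑_{X ∩ Y = A} m₁ X * m₂ Y` of two OverMasses on `[0, ψ]`
(nonnegative, bounded by `ψ`, total mass `ψ`) is again valued in `[0, ψ]`
with total mass `ψ`. -/
theorem overConjunctive_of_overMasses_isOverMass
    (Θ : Type*) [Fintype Θ] [DecidableEq Θ]
    (ψ : ℝ) (hψ : ψ > 0)
    (m₁ m₂ : Finset Θ → ℝ)
    (h₁ : ∀ A : Finset Θ, 0 ≤ m₁ A ∧ m₁ A ≤ ψ)
    (h₂ : ∀ A : Finset Θ, 0 ≤ m₂ A ∧ m₂ A ≤ ψ)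
    (hs₁ : (∑ A : Finset Θ, m₁ A) = ψ)
    (hs₂ : (∑ A : Finset Θ, m₂ A) = ψ)
    (m : Finset Θ → ℝ)
    (hm : ∀ A : Finset Θ,
      m A = (1 / ψ) * ∑ X : Finset Θ, ∑ Y : Finset Θ,
        if X ∩ Y = A then m₁ X * m₂ Y else 0) :
    (∀ A : Finset Θ, 0 ≤ m A ∧ m A ≤ ψ) ∧ (∑ A : Finset Θ, m A) = ψ := by
  have hterm : ∀ (A X Y : Finset Θ),
      0 ≤ (if X ∩ Y = A then m₁ X * m₂ Y else 0) := by
    intro A X Y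
    split
    · exact mul_nonneg (h₁ X).1 (h₂ Y).1
    · exact le_refl 0
  have hsum : ∀ A : Finset Θ,
      0 ≤ ∑ X : Finset Θ, ∑ Y : Finset Θ,
        if X ∩ Y = A then m₁ X * m₂ Y else 0 := by
    intro A
    exact Finset.sum_nonneg fun X _ => Finset.sum_nonneg fun Y _ => hterm A X Y
  have htotal : (∑ A : Finset Θ, ∑ X : Finset Θ, ∑ Y : Finset Θ,
      if X ∩ Y = A then m₁ X * m₂ Y else 0) = ψ * ψ := by
    rw [Finset.sum_comm]
    have : ∀ X : Finset Θ, (∑ A : Finset Θ, ∑ Y : Finset Θ,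
        if X ∩ Y = A then m₁ X * m₂ Y else 0) = m₁ X * ∑ Y : Finset Θ, m₂ Y := by
      intro X
      rw [Finset.sum_comm, Finset.mul_sum]
      refine Finset.sum_congr rfl fun Y _ => ?_
      simp
    simp only [this]
    rw [← Finset.sum_mul, hs₁, hs₂]
  have hle : ∀ A : Finset Θ, (∑ X : Finset Θ, ∑ Y : Finset Θ,
      if X ∩ Y = A then m₁ X * m₂ Y else 0) ≤ ψ * ψ := by
    intro A
    rw [← htotal]
    exact Finset.single_le_sum (f := fun A => ∑ X : Finset Θ, ∑ Y : Finset Θ,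
      if X ∩ Y = A then m₁ X * m₂ Y else 0) (fun B _ => hsum B) (Finset.mem_univ A)
  constructor
  · intro A
    rw [hm A]
    constructor
    · exact mul_nonneg (by positivity) (hsum A)
    · calc (1 / ψ) * (∑ X : Finset Θ, ∑ Y : Finset Θ,
          if X ∩ Y = A then m₁ X * m₂ Y else 0)
          ≤ (1 / ψ) * (ψ * ψ) := by
            exact mul_le_mul_of_nonneg_left (hle A) (by positivity)
        _ = ψ := by field_simp
  · simp only [hm, ← Finset.mul_sum, htotal]
    field_simp
end

section
/- Let Θ be a finite set and ψ₁, ψ₂ real numbers with ψ₁ > 0 and ψ₂ ≥ 0. Let m₁, m₂ : 2^Θ → ℝ be nonnegative mass assignments with total masses ∑_{A ⊆ Θ} m₁(A) = ψ₁ and ∑_{A ⊆ Θ} m₂(A) = ψ₂ (sources valued on different intervals [0, ψ₁] and [0, ψ₂]). Define the combination m(A) = (1/ψ₁) · ∑_{X,Y ⊆ Θ, X ∩ Y = A} m₁(X)·m₂(Y). Then 0 ≤ m(A) ≤ ψ₂ for every A ⊆ Θ and ∑_{A ⊆ Θ} m(A) = ψ₂; i.e., OverNormalizing the conjunctive combination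 by the first source's total produces a mass assignment valued in [0, ψ₂] with total mass ψ₂. -/
/-- For nonnegative mass assignments `m₁, m₂` with total masses `ψ₁ > 0`
and `ψ₂ ≥ 0` respectively (sources valued on different intervals `[0, ψ₁]` and `[0, ψ₂]`),
the combination `m A = (1/ψ₁) ∑_{X ∩ Y = A} m₁ X * m₂ Y` obtained by OverNormalizing the
conjunctive rule by the first source's total is valued in `[0, ψ₂]` with total mass `ψ₂`. -/
theorem overConjunctive_different_intervals
    (Θ : Type*) [Fintype Θ] [DecidableEq Θ]
    (ψ₁ ψ₂ : ℝ) (hψ₁ : ψ₁ > 0) (hψ₂ : ψ₂ ≥ 0)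
    (m₁ m₂ : Finset Θ → ℝ)
    (h₁ : ∀ A : Finset Θ, 0 ≤ m₁ A)
    (h₂ : ∀ A : Finset Θ, 0 ≤ m₂ A)
    (hs₁ : (∑ A : Finset Θ, m₁ A) = ψ₁)
    (hs₂ : (∑ A : Finset Θ, m₂ A) = ψ₂)
    (m : Finset Θ → ℝ)
    (hm : ∀ A : Finset Θ,
      m A = (1 / ψ₁) * ∑ X : Finset Θ, ∑ Y : Finset Θ,
        if X ∩ Y = A then m₁ X * m₂ Y else 0) :
    (∀ A : Finset Θ, 0 ≤ m A ∧ m A ≤ ψ₂) ∧ (∑ A : Finset Θ, m A) = ψ₂ := by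
  have hS0 : ∀ A : Finset Θ, 0 ≤ ∑ X : Finset Θ, ∑ Y : Finset Θ,
      if X ∩ Y = A then m₁ X * m₂ Y else 0 := by
    intro A
    apply Finset.sum_nonneg; intro X _
    apply Finset.sum_nonneg; intro Y _
    split
    · exact mul_nonneg (h₁ X) (h₂ Y)
    · exact le_rfl
  constructor
  · intro A
    have hle : (∑ X : Finset Θ, ∑ Y : Finset Θ,
        if X ∩ Y = A then m₁ X * m₂ Y else 0) ≤ ψ₁ * ψ₂ := by
      calc (∑ X : Finset Θ, ∑ Y : Finset Θ, if X ∩ Y = A then m₁ X * m₂ Y else 0)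
          ≤ ∑ X : Finset Θ, ∑ Y : Finset Θ, m₁ X * m₂ Y := by
            apply Finset.sum_le_sum; intro X _
            apply Finset.sum_le_sum; intro Y _
            split
            · exact le_rfl
            · exact mul_nonneg (h₁ X) (h₂ Y)
        _ = ψ₁ * ψ₂ := by
            rw [← hs₁, ← hs₂, Finset.sum_mul_sum]
    constructor
    · rw [hm A]
      exact mul_nonneg (by positivity) (hS0 A)
    · rw [hm A]
      calc (1 / ψ₁) * (∑ X : Finset Θ, ∑ Y : Finset Θ,
            if X ∩ Y = A then m₁ X * m₂ Y else 0)
          ≤ (1 / ψ₁) * (ψ₁ * ψ₂) := by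
            exact mul_le_mul_of_nonneg_left hle (by positivity)
        _ = ψ₂ := by field_simp
  · have : (∑ A : Finset Θ, m A) = (1 / ψ₁) * ∑ A : Finset Θ,
        ∑ X : Finset Θ, ∑ Y : Finset Θ, if X ∩ Y = A then m₁ X * m₂ Y else 0 := by
      rw [Finset.mul_sum]
      exact Finset.sum_congr rfl fun A _ => hm A
    rw [this]
    have hswap : (∑ A : Finset Θ, ∑ X : Finset Θ, ∑ Y : Finset Θ,
        if X ∩ Y = A then m₁ X * m₂ Y else 0) = ψ₁ * ψ₂ := by
      rw [Finset.sum_comm]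
      have : ∀ X : Finset Θ, (∑ A : Finset Θ, ∑ Y : Finset Θ,
          if X ∩ Y = A then m₁ X * m₂ Y else 0) = m₁ X * ψ₂ := by
        intro X
        rw [Finset.sum_comm]
        have : ∀ Y : Finset Θ, (∑ A : Finset Θ,
            if X ∩ Y = A then m₁ X * m₂ Y else 0) = m₁ X * m₂ Y := by
          intro Y
          rw [Finset.sum_ite_eq (Finset.univ) (X ∩ Y) (fun _ => m₁ X * m₂ Y)]
          simp
        simp_rw [this, ← Finset.mul_sum, hs₂]
      simp_rw [this, ← Finset.sum_mul, hs₁]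
    rw [hswap]
    field_simp
end

section
/- (PCR5 is mass-conserving.) Let Θ be a finite set and let m₁, m₂ : 2^Θ → ℝ be nonnegative mass assignments with m₁(∅) = m₂(∅) = 0. Let m₁₂(A) = ∑_{X ∩ Y = A} m₁(X)·m₂(Y) denote the conjunctive combination. Define the PCR5 combination by m_PCR5(∅) = 0 and, for every nonempty A ⊆ Θ, m_PCR5(A) = m₁₂(A) + ∑_{X ⊆ Θ, X ∩ A = ∅} [ m₁(A)²·m₂(X)/(m₁(A) + m₂(X)) + m₂(A)²·m₁(X)/(m₂(A) + m₁(X)) ], where any fraction whose denominator is zero is discarded (taken to be 0). Then ∑_{A ⊆ Θ} m_PCR5(A) = (∑_{X ⊆ Θ} m₁(X)) · (∑_{Y ⊆ Θ} m₂(Y)); in particular, PCR5 redistributes the entire conflicting mass m₁₂(∅) to the nonempty sets, preserving the total product mass. -/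
private lemma pcr5_key (a b : ℝ) (ha : 0 ≤ a) (hb : 0 ≤ b) :
    a ^ 2 * b / (a + b) + b ^ 2 * a / (b + a) = a * b := by
  rcases eq_or_ne (a + b) 0 with h | h
  · have ha0 : a = 0 := le_antisymm (by linarith) ha
    have hb0 : b = 0 := by linarith
    simp [ha0, hb0]
  · rw [add_comm b a, ← add_div, div_eq_iff h]
    ring

/-- (PCR5 is mass-conserving.) For nonnegative mass assignments
`m₁, m₂` with `m₁ ∅ = m₂ ∅ = 0`, the PCR5 combination
`m_PCR5 ∅ = 0`, and for nonempty `A`,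
`m_PCR5 A = m₁₂ A + ∑_{X ∩ A = ∅} [m₁(A)²m₂(X)/(m₁(A)+m₂(X)) + m₂(A)²m₁(X)/(m₂(A)+m₁(X))]`
(fractions with zero denominator discarded, which matches Lean's `x / 0 = 0`),
has total mass equal to the product of the sources' total masses. -/
theorem pcr5_total_mass_eq_product
    (Θ : Type*) [Fintype Θ] [DecidableEq Θ]
    (m₁ m₂ : Finset Θ → ℝ)
    (h₁ : ∀ A : Finset Θ, 0 ≤ m₁ A) (h₂ : ∀ A : Finset Θ, 0 ≤ m₂ A)
    (h₁empty : m₁ ∅ = 0) (h₂empty : m₂ ∅ = 0)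
    (m₁₂ : Finset Θ → ℝ)
    (hm₁₂ : ∀ A : Finset Θ,
      m₁₂ A = ∑ X : Finset Θ, ∑ Y : Finset Θ,
        if X ∩ Y = A then m₁ X * m₂ Y else 0)
    (mPCR5 : Finset Θ → ℝ)
    (hPCR5empty : mPCR5 ∅ = 0)
    (hPCR5 : ∀ A : Finset Θ, A ≠ ∅ →
      mPCR5 A = m₁₂ A + ∑ X : Finset Θ,
        if X ∩ A = ∅ then
          m₁ A ^ 2 * m₂ X / (m₁ A + m₂ X) + m₂ A ^ 2 * m₁ X / (m₂ A + m₁ X)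
        else 0) :
    (∑ A : Finset Θ, mPCR5 A) = (∑ X : Finset Θ, m₁ X) * (∑ Y : Finset Θ, m₂ Y) := by
  classical
  set R : Finset Θ → ℝ := fun A => ∑ X : Finset Θ,
    if X ∩ A = ∅ then
      m₁ A ^ 2 * m₂ X / (m₁ A + m₂ X) + m₂ A ^ 2 * m₁ X / (m₂ A + m₁ X)
    else 0 with hR
  -- total conjunctive mass equals the product
  have hconj : ∑ A : Finset Θ, m₁₂ A
      = (∑ X : Finset Θ, m₁ X) * (∑ Y : Finset Θ, m₂ Y) := by
    simp only [hm₁₂]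
    rw [Finset.sum_comm]
    have hstep : ∀ X : Finset Θ, (∑ A : Finset Θ, ∑ Y : Finset Θ,
        if X ∩ Y = A then m₁ X * m₂ Y else 0)
      = ∑ Y : Finset Θ, ∑ A : Finset Θ,
        if X ∩ Y = A then m₁ X * m₂ Y else 0 := fun X => Finset.sum_comm
    simp only [hstep, Finset.sum_ite_eq, Finset.mem_univ, if_true]
    rw [Finset.sum_mul_sum]
  -- R ∅ = 0
  have hRempty : R ∅ = 0 := by
    simp [hR, h₁empty, h₂empty]
  -- total redistribution equals the conflict m₁₂ ∅
  have hRtot : ∑ A : Finset Θ, R A = m₁₂ ∅ := by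
    simp only [hR]
    have hsplit : ∀ A : Finset Θ, (∑ X : Finset Θ,
        if X ∩ A = ∅ then
          m₁ A ^ 2 * m₂ X / (m₁ A + m₂ X) + m₂ A ^ 2 * m₁ X / (m₂ A + m₁ X)
        else 0)
      = (∑ X : Finset Θ, if X ∩ A = ∅ then m₁ A ^ 2 * m₂ X / (m₁ A + m₂ X) else 0)
        + (∑ X : Finset Θ, if X ∩ A = ∅ then m₂ A ^ 2 * m₁ X / (m₂ A + m₁ X) else 0) := by
      intro A
      rw [← Finset.sum_add_distrib]
      apply Finset.sum_congr rfl
      intro X _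
      split_ifs <;> simp
    simp only [hsplit]
    rw [Finset.sum_add_distrib]
    -- swap variables in the second double sum
    have hswap : (∑ A : Finset Θ, ∑ X : Finset Θ,
        if X ∩ A = ∅ then m₂ A ^ 2 * m₁ X / (m₂ A + m₁ X) else 0)
      = ∑ A : Finset Θ, ∑ X : Finset Θ,
        if X ∩ A = ∅ then m₂ X ^ 2 * m₁ A / (m₂ X + m₁ A) else 0 := by
      rw [Finset.sum_comm]
      apply Finset.sum_congr rfl; intro A _
      apply Finset.sum_congr rfl; intro X _
      rw [Finset.inter_comm]
    rw [hswap, ← Finset.sum_add_distrib]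
    have hm : ∀ A : Finset Θ, ((∑ X : Finset Θ,
          if X ∩ A = ∅ then m₁ A ^ 2 * m₂ X / (m₁ A + m₂ X) else 0)
        + ∑ X : Finset Θ,
          if X ∩ A = ∅ then m₂ X ^ 2 * m₁ A / (m₂ X + m₁ A) else 0)
      = ∑ X : Finset Θ, if X ∩ A = ∅ then m₁ A * m₂ X else 0 := by
      intro A
      rw [← Finset.sum_add_distrib]
      apply Finset.sum_congr rfl
      intro X _
      split_ifs with h
      · exact pcr5_key (m₁ A) (m₂ X) (h₁ A) (h₂ X)
      · simp
    simp only [hm]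
    rw [hm₁₂ ∅]
    apply Finset.sum_congr rfl; intro A _
    apply Finset.sum_congr rfl; intro X _
    rw [Finset.inter_comm X A]
  -- assemble
  have hval : ∀ A : Finset Θ, mPCR5 A = (if A = ∅ then 0 else m₁₂ A + R A) := by
    intro A
    split_ifs with h
    · rw [h, hPCR5empty]
    · exact hPCR5 A h
  calc ∑ A : Finset Θ, mPCR5 A
      = ∑ A : Finset Θ, (if A = ∅ then 0 else m₁₂ A + R A) :=
        Finset.sum_congr rfl fun A _ => hval A
    _ = ∑ A : Finset Θ, ((m₁₂ A + R A) - if A = ∅ then m₁₂ A + R A else 0) := by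
        apply Finset.sum_congr rfl; intro A _; split_ifs <;> ring
    _ = (∑ A : Finset Θ, m₁₂ A) + (∑ A : Finset Θ, R A) - (m₁₂ ∅ + R ∅) := by
        rw [Finset.sum_sub_distrib, Finset.sum_add_distrib, Finset.sum_ite_eq' Finset.univ ∅]
        simp
    _ = (∑ X : Finset Θ, m₁ X) * (∑ Y : Finset Θ, m₂ Y) := by
        rw [hconj, hRtot, hRempty]; ring
end
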